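/- Let α ∈ (1,2) and 0 < β < α − 1. Then ∫_0^∞ [(1+z)^β − 1] z μ_α(dz) = αβΓ(α−β−1)/(Γ(α)Γ(1−β)). -/

import Mathlib

/-!
Write `μ_α(dz) = c z^(-1-α) dz`. Integrating `((1+z)^β - 1) z^(-α)` by parts against
`z^(1-α)/(1-α)` leaves `β/(α-1) ∫₀^∞ z^(1-α) (1+z)^(β-1) dz`, a Beta integral of the second kind
equal to `Γ(2-α) Γ(α-1-β) / Γ(1-β)`; it is reduced to Euler's Beta integral on `(0,1)` by the
substitution `z = x/(1-x)`. The boundary terms vanish because `0 ≤ (1+z)^β - 1 ≤ βz` near `0` and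
`(1+z)^β ≤ (2z)^β` for `z ≥ 1`, and the same bounds give integrability.
-/

open MeasureTheory Set Real Filter Topology

lemma ofReal_rpow_mul_one_sub_rpow (a b : ℝ) {x : ℝ} (hx₀ : 0 ≤ x) (hx₁ : x ≤ 1) :
    ((x ^ (a - 1) * (1 - x) ^ (b - 1) : ℝ) : ℂ)
      = (x : ℂ) ^ ((a : ℂ) - 1) * (1 - (x : ℂ)) ^ ((b : ℂ) - 1) := by
  rw [Complex.ofReal_mul, Complex.ofReal_cpow hx₀, Complex.ofReal_cpow (sub_nonneg.2 hx₁)]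
  push_cast
  rfl

lemma integrableOn_rpow_mul_one_sub_rpow {a b : ℝ} (ha : 0 < a) (hb : 0 < b) :
    IntegrableOn (fun x : ℝ => x ^ (a - 1) * (1 - x) ^ (b - 1)) (Ioo 0 1) := by
  have h : IntegrableOn
      (fun x : ℝ => RCLike.re ((x : ℂ) ^ ((a : ℂ) - 1) * (1 - (x : ℂ)) ^ ((b : ℂ) - 1)))
      (Ioc 0 1) :=
    (Complex.betaIntegral_convergent (u := a) (v := b) (by simpa) (by simpa)).1.re
  refine (h.congr_fun (fun x hx => ?_) measurableSet_Ioc).mono_set Ioo_subset_Ioc_self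
  simp only [← ofReal_rpow_mul_one_sub_rpow a b hx.1.le hx.2, RCLike.re_to_complex,
    Complex.ofReal_re]

lemma integral_rpow_mul_one_sub_rpow {a b : ℝ} (ha : 0 < a) (hb : 0 < b) :
    ∫ x in Ioo 0 1, x ^ (a - 1) * (1 - x) ^ (b - 1) = Gamma a * Gamma b / Gamma (a + b) := by
  rw [← integral_Ioc_eq_integral_Ioo]
  apply Complex.ofReal_injective
  have h := Complex.betaIntegral_eq_Gamma_mul_div a b (by simpa) (by simpa)
  rw [Complex.betaIntegral, intervalIntegral.integral_of_le zero_le_one] at h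
  push_cast [← Complex.ofReal_add, Complex.Gamma_ofReal] at h ⊢
  rw [← h, ← integral_complex_ofReal]
  exact setIntegral_congr_fun measurableSet_Ioc
    fun x hx => ofReal_rpow_mul_one_sub_rpow a b hx.1.le hx.2

lemma hasDerivAt_div_one_sub {x : ℝ} (hx : x ≠ 1) :
    HasDerivAt (fun x : ℝ => x / (1 - x)) ((1 - x) ^ 2)⁻¹ x := by
  have h := (hasDerivAt_id x).div ((hasDerivAt_id x).const_sub 1) (sub_ne_zero.2 hx.symm)
  refine h.congr_deriv ?_
  simp only [id]
  field_simp
  ring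

lemma image_div_one_sub_Ioo : (fun x : ℝ => x / (1 - x)) '' Ioo 0 1 = Ioi 0 := by
  ext y
  constructor
  · rintro ⟨x, ⟨hx₀, hx₁⟩, rfl⟩
    exact div_pos hx₀ (sub_pos.2 hx₁)
  · intro (hy : 0 < y)
    refine ⟨y / (1 + y), ⟨by positivity, (div_lt_one (by positivity)).2 (by linarith)⟩, ?_⟩
    field_simp
    ring

lemma injOn_div_one_sub : InjOn (fun x : ℝ => x / (1 - x)) (Iio 1) := by
  intro x (hx : x < 1) y (hy : y < 1) h
  field_simp [(sub_pos.2 hx).ne', (sub_pos.2 hy).ne'] at h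
  linarith

lemma abs_deriv_smul_rpow_div_one_sub (a b : ℝ) {x : ℝ} (hx : x ∈ Ioo (0 : ℝ) 1) :
    |((1 - x) ^ 2)⁻¹| • ((x / (1 - x)) ^ (a - 1) * (1 + x / (1 - x)) ^ (-(a + b)))
      = x ^ (a - 1) * (1 - x) ^ (b - 1) := by
  obtain ⟨hx₀, hx₁⟩ := hx
  have h₁ : 0 < 1 - x := sub_pos.2 hx₁
  have h_one_add : 1 + x / (1 - x) = (1 - x)⁻¹ := by field_simp; ring
  have h_sq : ((1 - x) ^ 2)⁻¹ = (1 - x) ^ (-2 : ℝ) := by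
    rw [Real.rpow_neg h₁.le, Real.rpow_two]
  rw [h_one_add, Real.inv_rpow h₁.le, ← Real.rpow_neg h₁.le, neg_neg, smul_eq_mul,
    abs_of_pos (by positivity), h_sq, Real.div_rpow hx₀.le h₁.le, div_eq_mul_inv,
    ← Real.rpow_neg h₁.le]
  calc (1 - x) ^ (-2 : ℝ) * (x ^ (a - 1) * (1 - x) ^ (-(a - 1)) * (1 - x) ^ (a + b))
        = x ^ (a - 1) * ((1 - x) ^ (-2 : ℝ) * (1 - x) ^ (-(a - 1)) * (1 - x) ^ (a + b)) := by
          ring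
    _ = x ^ (a - 1) * (1 - x) ^ (b - 1) := by
      rw [← Real.rpow_add h₁, ← Real.rpow_add h₁]
      ring_nf

lemma integrableOn_Ioi_rpow_mul_one_add_rpow {a b : ℝ} (ha : 0 < a) (hb : 0 < b) :
    IntegrableOn (fun t : ℝ => t ^ (a - 1) * (1 + t) ^ (-(a + b))) (Ioi 0) := by
  rw [← image_div_one_sub_Ioo, integrableOn_image_iff_integrableOn_abs_deriv_smul measurableSet_Ioo
    (fun x hx => (hasDerivAt_div_one_sub hx.2.ne).hasDerivWithinAt)
    (injOn_div_one_sub.mono fun x hx => hx.2)]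
  exact (integrableOn_rpow_mul_one_sub_rpow ha hb).congr_fun
    (fun x hx => (abs_deriv_smul_rpow_div_one_sub a b hx).symm) measurableSet_Ioo

lemma integral_Ioi_rpow_mul_one_add_rpow {a b : ℝ} (ha : 0 < a) (hb : 0 < b) :
    ∫ t in Ioi (0 : ℝ), t ^ (a - 1) * (1 + t) ^ (-(a + b))
      = Gamma a * Gamma b / Gamma (a + b) := by
  rw [← image_div_one_sub_Ioo, integral_image_eq_integral_abs_deriv_smul measurableSet_Ioo
    (fun x hx => (hasDerivAt_div_one_sub hx.2.ne).hasDerivWithinAt)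
    (injOn_div_one_sub.mono fun x hx => hx.2),
    setIntegral_congr_fun measurableSet_Ioo fun x hx => abs_deriv_smul_rpow_div_one_sub a b hx]
  exact integral_rpow_mul_one_sub_rpow ha hb

section OneAddRpow

variable {β : ℝ}

lemma one_add_rpow_sub_one_nonneg (hβ : 0 ≤ β) {z : ℝ} (hz : 0 ≤ z) :
    0 ≤ (1 + z) ^ β - 1 :=
  sub_nonneg.2 (Real.one_le_rpow (by linarith) hβ)

lemma one_add_rpow_sub_one_le (hβ₀ : 0 ≤ β) (hβ₁ : β ≤ 1) {z : ℝ} (hz : 0 ≤ z) :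
    (1 + z) ^ β - 1 ≤ β * z := by
  linarith [rpow_one_add_le_one_add_mul_self (by linarith : -1 ≤ z) hβ₀ hβ₁]

lemma one_add_rpow_le_two_rpow_mul_rpow (hβ : 0 ≤ β) {z : ℝ} (hz : 1 ≤ z) :
    (1 + z) ^ β ≤ 2 ^ β * z ^ β := by
  rw [← Real.mul_rpow zero_le_two (by linarith)]
  exact Real.rpow_le_rpow (by linarith) (by linarith) hβ

variable {s : ℝ}

lemma integrableOn_Ioi_one_add_rpow_sub_one_mul_rpow (hβ : 0 ≤ β) (hβs : β + 1 < s)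
    (hs : s < 2) :
    IntegrableOn (fun z : ℝ => ((1 + z) ^ β - 1) * z ^ (-s)) (Ioi 0) := by
  have hmeas : AEStronglyMeasurable (fun z : ℝ => ((1 + z) ^ β - 1) * z ^ (-s))
      (volume.restrict (Ioi 0)) := by
    refine ContinuousOn.aestronglyMeasurable (fun z hz => ?_) measurableSet_Ioi
    have hz : 0 < z := hz
    exact ((((continuousAt_const.add continuousAt_id).rpow_const
      (Or.inl (by positivity : 1 + z ≠ 0))).sub continuousAt_const).mul
      (continuousAt_id.rpow_const (Or.inl hz.ne'))).continuousWithinAt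
  rw [← Ioc_union_Ioi_eq_Ioi zero_le_one]
  refine IntegrableOn.union ?_ ?_
  · have h_dom : IntegrableOn (fun z : ℝ => β * z ^ (1 - s)) (Ioc 0 1) :=
      ((intervalIntegral.intervalIntegrable_rpow' (by linarith : -1 < 1 - s)).1).const_mul β
    refine h_dom.mono' (hmeas.mono_set Ioc_subset_Ioi_self)
      ((ae_restrict_iff' measurableSet_Ioc).2 (ae_of_all _ ?_))
    intro z ⟨hz₀, _⟩
    have hu := one_add_rpow_sub_one_le hβ (by linarith) hz₀.le
    rw [Real.norm_of_nonneg (mul_nonneg (one_add_rpow_sub_one_nonneg hβ hz₀.le) (by positivity)),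
      show 1 - s = 1 + -s by ring, Real.rpow_add hz₀, Real.rpow_one, ← mul_assoc]
    exact mul_le_mul_of_nonneg_right hu (by positivity)
  · have h_dom : IntegrableOn (fun z : ℝ => 2 ^ β * z ^ (β - s)) (Ioi 1) :=
      (integrableOn_Ioi_rpow_of_lt (by linarith : β - s < -1) zero_lt_one).const_mul (2 ^ β)
    refine h_dom.mono' (hmeas.mono_set (Ioi_subset_Ioi zero_le_one))
      ((ae_restrict_iff' measurableSet_Ioi).2 (ae_of_all _ ?_))
    intro z (hz : 1 < z)
    have hu := one_add_rpow_le_two_rpow_mul_rpow hβ hz.le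
    rw [Real.norm_of_nonneg
        (mul_nonneg (one_add_rpow_sub_one_nonneg hβ (by linarith)) (by positivity)),
      sub_eq_add_neg β, Real.rpow_add (by linarith), ← mul_assoc]
    exact mul_le_mul_of_nonneg_right (by linarith) (by positivity)

lemma tendsto_one_add_rpow_sub_one_mul_rpow_nhdsGT_zero (hβ₀ : 0 ≤ β) (hβ₁ : β ≤ 1)
    (hs : s < 2) :
    Tendsto (fun z : ℝ => ((1 + z) ^ β - 1) * z ^ (1 - s)) (𝓝[>] 0) (𝓝 0) := by
  have h_upper : Tendsto (fun z : ℝ => β * z ^ (2 - s)) (𝓝[>] 0) (𝓝 0) := by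
    have := ((Real.continuousAt_rpow_const 0 (2 - s) (Or.inr (by linarith))).tendsto.const_mul β)
    rw [Real.zero_rpow (by linarith), mul_zero] at this
    exact tendsto_nhdsWithin_of_tendsto_nhds this
  refine tendsto_of_tendsto_of_tendsto_of_le_of_le' tendsto_const_nhds h_upper ?_ ?_ <;>
    filter_upwards [self_mem_nhdsWithin] with z (hz : 0 < z)
  · exact mul_nonneg (one_add_rpow_sub_one_nonneg hβ₀ hz.le) (by positivity)
  · rw [show 2 - s = 1 + (1 - s) by ring, Real.rpow_add hz, Real.rpow_one, ← mul_assoc]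
    exact mul_le_mul_of_nonneg_right (one_add_rpow_sub_one_le hβ₀ hβ₁ hz.le) (by positivity)

lemma tendsto_one_add_rpow_sub_one_mul_rpow_atTop (hβ : 0 ≤ β) (hβs : β + 1 < s) :
    Tendsto (fun z : ℝ => ((1 + z) ^ β - 1) * z ^ (1 - s)) atTop (𝓝 0) := by
  have h_upper : Tendsto (fun z : ℝ => 2 ^ β * z ^ (β + 1 - s)) atTop (𝓝 0) := by
    have := (tendsto_rpow_neg_atTop (by linarith : 0 < s - 1 - β)).const_mul (2 ^ β)
    rw [mul_zero] at this
    exact this.congr fun z => by ring_nf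
  refine tendsto_of_tendsto_of_tendsto_of_le_of_le' tendsto_const_nhds h_upper ?_ ?_ <;>
    filter_upwards [eventually_ge_atTop 1] with z hz
  · exact mul_nonneg (one_add_rpow_sub_one_nonneg hβ (by linarith)) (by positivity)
  · rw [add_sub_assoc, Real.rpow_add (by linarith), ← mul_assoc]
    exact mul_le_mul_of_nonneg_right
      (by linarith [one_add_rpow_le_two_rpow_mul_rpow hβ hz]) (by positivity)

lemma hasDerivAt_one_add_rpow_sub_one {z : ℝ} (hz : 0 < z) :
    HasDerivAt (fun z : ℝ => (1 + z) ^ β - 1) (β * (1 + z) ^ (β - 1)) z := by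
  have h := (((hasDerivAt_id z).const_add 1).rpow_const (p := β)
    (Or.inl (by positivity))).sub_const 1
  exact h.congr_deriv (by simp)

lemma hasDerivAt_rpow_div_one_sub (hs : s ≠ 1) {z : ℝ} (hz : 0 < z) :
    HasDerivAt (fun z : ℝ => z ^ (1 - s) / (1 - s)) (z ^ (-s)) z := by
  have h := (Real.hasDerivAt_rpow_const (p := 1 - s) (Or.inl hz.ne')).div_const (1 - s)
  refine h.congr_deriv ?_
  rw [sub_sub_cancel_left, mul_div_cancel_left₀ _ (sub_ne_zero.2 hs.symm)]

lemma integral_Ioi_one_add_rpow_sub_one_mul_rpow (hβ : 0 ≤ β) (hβs : β + 1 < s) (hs : s < 2) :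
    ∫ z in Ioi (0 : ℝ), ((1 + z) ^ β - 1) * z ^ (-s)
      = β / (s - 1) * (Gamma (2 - s) * Gamma (s - 1 - β) / Gamma (1 - β)) := by
  have h_int := integrableOn_Ioi_rpow_mul_one_add_rpow (a := 2 - s) (b := s - 1 - β)
    (by linarith) (by linarith)
  have h_beta := integral_Ioi_rpow_mul_one_add_rpow (a := 2 - s) (b := s - 1 - β)
    (by linarith) (by linarith)
  simp only [show 2 - s - 1 = 1 - s by ring, show 2 - s + (s - 1 - β) = 1 - β by ring,
    show -(1 - β) = β - 1 by ring] at h_int h_beta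
  have h_ibp := integral_Ioi_mul_deriv_eq_deriv_mul
    (fun z hz => hasDerivAt_one_add_rpow_sub_one hz)
    (fun z hz => hasDerivAt_rpow_div_one_sub (by linarith) hz)
    (integrableOn_Ioi_one_add_rpow_sub_one_mul_rpow hβ hβs hs)
    (IntegrableOn.congr_fun (h_int.const_mul (β / (1 - s)))
      (fun z _ => by simp only [Pi.mul_apply]; ring) measurableSet_Ioi)
    (by simpa only [Pi.mul_def, mul_div_assoc] using
      (tendsto_one_add_rpow_sub_one_mul_rpow_nhdsGT_zero hβ (by linarith) hs).div_const (1 - s))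
    (by simpa only [Pi.mul_def, mul_div_assoc] using
      (tendsto_one_add_rpow_sub_one_mul_rpow_atTop hβ hβs).div_const (1 - s))
  rw [h_ibp, sub_self, zero_sub, ← h_beta, ← integral_const_mul, ← integral_neg]
  refine setIntegral_congr_fun measurableSet_Ioi fun z _ => ?_
  field_simp [(by linarith : s - 1 ≠ 0), (by linarith : 1 - s ≠ 0)]
  ring

end OneAddRpow

theorem stable_measure_integral_three_general (α β : ℝ) (hα₂ : α < 2)
    (hβ₀ : 0 < β) (hβ : β < α - 1) :
    ∫ z in Ioi (0 : ℝ),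
        ((1 + z) ^ β - 1) * z *
          (α * (α - 1) / (Real.Gamma α * Real.Gamma (2 - α)) * z ^ (-1 - α))
      = α * β * Real.Gamma (α - β - 1) / (Real.Gamma α * Real.Gamma (1 - β)) := by
  set c := α * (α - 1) / (Real.Gamma α * Real.Gamma (2 - α)) with hc
  have h_integrand : ∀ z ∈ Ioi (0 : ℝ),
      ((1 + z) ^ β - 1) * z * (c * z ^ (-1 - α)) = c * (((1 + z) ^ β - 1) * z ^ (-α)) := by
    intro z (hz : 0 < z)
    rw [show -α = 1 + (-1 - α) by ring, Real.rpow_add hz, Real.rpow_one]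
    ring
  rw [setIntegral_congr_fun measurableSet_Ioi h_integrand, integral_const_mul,
    integral_Ioi_one_add_rpow_sub_one_mul_rpow hβ₀.le (by linarith) hα₂,
    show α - 1 - β = α - β - 1 by ring, hc]
  have hΓ₂ : Real.Gamma (2 - α) ≠ 0 := (Real.Gamma_pos_of_pos (by linarith)).ne'
  field_simp [(by linarith : α - 1 ≠ 0)]

/-- Lemma 3.2, third identity: for `α ∈ (1,2)` and `0 < β < α − 1`,
`∫_0^∞ [(1+z)^β − 1] z μ_α(dz) = αβΓ(α−β−1)/(Γ(α)Γ(1−β))`, where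
`μ_α(dz) = (α(α−1)/(Γ(α)Γ(2−α))) z^{−1−α} dz` on `(0,∞)`. -/
theorem stable_measure_integral_three (α β : ℝ) (hα₁ : 1 < α) (hα₂ : α < 2)
    (hβ₀ : 0 < β) (hβ : β < α - 1) :
    ∫ z in Ioi (0 : ℝ),
        ((1 + z) ^ β - 1) * z *
          (α * (α - 1) / (Real.Gamma α * Real.Gamma (2 - α)) * z ^ (-1 - α))
      = α * β * Real.Gamma (α - β - 1) / (Real.Gamma α * Real.Gamma (1 - β)) :=
  stable_measure_integral_three_general α β hα₂ hβ₀ hβ
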